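/- Let X ⊆ ℝ⁴ be a symplectic polytope. Then for every y ∈ frontier X, the Reeb cone at y has dimension at most 1: any two vectors w₁, w₂ with wⱼ ∈ T_y⁺X and −i·wⱼ ∈ N_y⁺X (j = 1, 2) are linearly dependent. (Lemma 3.8 of the paper.) -/

import Mathlib

/-!
If `w₁, w₂` in the Reeb cone at `y` were independent, pairing each `wⱼ` with the other normal
`-i·wₖ` gives `ω₀(w₁, w₂) = 0`, so `P = span {w₁, w₂}` is Lagrangian. Both normals are orthogonal
to `w₁ + w₂`, so they stay normal at `y' = y + ε(w₁ + w₂)`. For small `ε` the only facets active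
at `y'` are those containing `w₁` and `w₂`, so `P ⊆ L_{y'}`. Also `L_{y'} ⊆ (i·P)ᗮ = P`. Hence
`L_{y'} = P` is a Lagrangian 2-face.
-/

open RealInnerProductSpace

/-- The standard complex structure on ℝ⁴:
`i(x₁,x₂,y₁,y₂) = (−y₁,−y₂,x₁,x₂)`. -/
def Imap (v : EuclideanSpace ℝ (Fin 4)) : EuclideanSpace ℝ (Fin 4) :=
  WithLp.toLp 2 ![-(v 2), -(v 3), v 0, v 1]

/-- The standard symplectic form on ℝ⁴: `ω₀(u,v) = ⟪i·u, v⟫`. -/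
noncomputable def omega0 (u v : EuclideanSpace ℝ (Fin 4)) : ℝ := ⟪Imap u, v⟫

/-- The tangent cone `T_y⁺X`. -/
def tangentConePlus {m : ℕ} (X : Set (EuclideanSpace ℝ (Fin m)))
    (y : EuclideanSpace ℝ (Fin m)) : Set (EuclideanSpace ℝ (Fin m)) :=
  closure {v | ∃ ε : ℝ, 0 < ε ∧ y + ε • v ∈ X}

/-- The positive normal cone `N_y⁺X`. -/
def normalConePlus {m : ℕ} (X : Set (EuclideanSpace ℝ (Fin m)))
    (y : EuclideanSpace ℝ (Fin m)) : Set (EuclideanSpace ℝ (Fin m)) :=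
  {v | ∀ x ∈ X, ⟪x - y, v⟫ ≤ 0}


open Submodule Filter Topology Module

local notation "ℝ⁴" => EuclideanSpace ℝ (Fin 4)

def complexStructure : ℝ⁴ ≃ₗ[ℝ] ℝ⁴ where
  toFun := Imap
  invFun v := -Imap v
  map_add' u v := by ext i; fin_cases i <;> simp [Imap] <;> ring
  map_smul' a v := by ext i; fin_cases i <;> simp [Imap]
  left_inv v := by ext i; fin_cases i <;> simp [Imap]
  right_inv v := by ext i; fin_cases i <;> simp [Imap]

@[simp] lemma complexStructure_apply (v : ℝ⁴) : complexStructure v = Imap v := rfl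

lemma inner_Imap_eq (u v : ℝ⁴) :
    ⟪Imap u, v⟫ = -(u 2 * v 0) - u 3 * v 1 + u 0 * v 2 + u 1 * v 3 := by
  simp only [Imap, PiLp.inner_apply, RCLike.inner_apply, Real.ringHom_apply, Fin.sum_univ_four,
    Matrix.cons_val_zero, Matrix.cons_val_one, Matrix.cons_val, mul_neg]
  ring

lemma inner_Imap_self (v : ℝ⁴) : ⟪Imap v, v⟫ = 0 := by
  rw [inner_Imap_eq]; ring

lemma inner_Imap_left (u v : ℝ⁴) : ⟪Imap u, v⟫ = -⟪u, Imap v⟫ := by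
  rw [inner_Imap_eq, real_inner_comm, inner_Imap_eq]; ring

lemma LinearIndependent.finrank_span_pair {K V : Type*} [DivisionRing K] [AddCommGroup V]
    [Module K V] {x y : V} (h : LinearIndependent K ![x, y]) : finrank K (span K {x, y}) = 2 := by
  rw [← Matrix.range_cons_cons_empty x y ![], finrank_span_eq_card h, Fintype.card_fin]

theorem Submodule.IsOrtho.eq_orthogonal_of_finrank_add {E : Type*} [NormedAddCommGroup E]
    [InnerProductSpace ℝ E] [FiniteDimensional ℝ E] {U V : Submodule ℝ E} (h : U ⟂ V)
    (hdim : finrank ℝ U + finrank ℝ V = finrank ℝ E) : V = Uᗮ :=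
  eq_of_le_of_finrank_eq h.symm (by have := U.finrank_add_finrank_orthogonal; omega)

/-- `(P.map complexStructure)ᗮ` is the `ω₀`-complement of `P`: an isotropic plane is Lagrangian. -/
theorem eq_orthogonal_map_complexStructure {P : Submodule ℝ ℝ⁴}
    (hP : P.map complexStructure.toLinearMap ⟂ P) (h2 : finrank ℝ P = 2) :
    P = (P.map complexStructure.toLinearMap)ᗮ :=
  hP.eq_orthogonal_of_finrank_add (by simp [LinearEquiv.finrank_map_eq, h2])

section Cones

variable {m : ℕ} {X : Set (EuclideanSpace ℝ (Fin m))} {y u v : EuclideanSpace ℝ (Fin m)}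

theorem inner_nonpos_of_mem_tangentConePlus_of_mem_normalConePlus
    (hv : v ∈ tangentConePlus X y) (hu : u ∈ normalConePlus X y) : ⟪v, u⟫ ≤ 0 := by
  refine closure_minimal (t := {w | ⟪w, u⟫ ≤ 0}) ?_
    (isClosed_le (continuous_id.inner continuous_const) continuous_const) hv
  rintro w ⟨ε, hε, hw⟩
  have h := hu _ hw
  rw [add_sub_cancel_left, real_inner_smul_left] at h
  exact nonpos_of_mul_nonpos_right h hε

theorem mem_orthogonal_span_normalConePlus (hv : v ∈ tangentConePlus X y)
    (hv' : -v ∈ tangentConePlus X y) : v ∈ (span ℝ (normalConePlus X y))ᗮ := by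
  suffices span ℝ {v} ⟂ span ℝ (normalConePlus X y) from this (mem_span_singleton_self v)
  refine isOrtho_span.2 fun w hw u hu => ?_
  obtain rfl := Set.mem_singleton_iff.1 hw
  have h₁ := inner_nonpos_of_mem_tangentConePlus_of_mem_normalConePlus hv hu
  have h₂ := inner_nonpos_of_mem_tangentConePlus_of_mem_normalConePlus hv' hu
  rw [inner_neg_left] at h₂
  linarith

theorem mem_normalConePlus_add_smul (hu : u ∈ normalConePlus X y) (hv : ⟪v, u⟫ = 0) (t : ℝ) :
    u ∈ normalConePlus X (y + t • v) := by
  intro x hx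
  rw [sub_add_eq_sub_sub, inner_sub_left, real_inner_smul_left, hv, mul_zero, sub_zero]
  exact hu x hx

theorem mem_frontier_of_mem_normalConePlus (hy : y ∈ X) (hu : u ∈ normalConePlus X y)
    (hu0 : u ≠ 0) : y ∈ frontier X := by
  refine ⟨subset_closure hy, fun hint => ?_⟩
  have hlim : Tendsto (fun t : ℝ => y + t • u) (𝓝[>] 0) (𝓝 y) :=
    (Continuous.tendsto' (by fun_prop) 0 y (by simp)).mono_left nhdsWithin_le_nhds
  obtain ⟨t, htX, ht⟩ :=
    ((hlim.eventually_mem (mem_interior_iff_mem_nhds.1 hint)).and self_mem_nhdsWithin).exists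
  have h := hu _ htX
  rw [add_sub_cancel_left, real_inner_smul_left, real_inner_self_eq_norm_sq] at h
  have : 0 < t * ‖u‖ ^ 2 := mul_pos ht (by positivity)
  linarith

end Cones

section Polyhedron

variable {ι : Type*} {m : ℕ} {n : ι → EuclideanSpace ℝ (Fin m)} {c : ι → ℝ}
  {X : Set (EuclideanSpace ℝ (Fin m))} {z s v : EuclideanSpace ℝ (Fin m)}

theorem isClosed_of_eq_iInter_halfspaces (hX : X = ⋂ i, {x | ⟪x, n i⟫ ≤ c i}) : IsClosed X :=
  hX ▸ isClosed_iInter fun _ => isClosed_le (continuous_id.inner continuous_const) continuous_const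

theorem mem_normalConePlus_of_inner_eq (hX : X = ⋂ i, {x | ⟪x, n i⟫ ≤ c i}) {i : ι}
    (hi : ⟪z, n i⟫ = c i) : n i ∈ normalConePlus X z := by
  intro x hx
  rw [hX, Set.mem_iInter] at hx
  rw [inner_sub_left, hi]
  exact sub_nonpos.2 (hx i)

theorem exists_pos_add_smul_mem [Finite ι] (hX : X = ⋂ i, {x | ⟪x, n i⟫ ≤ c i}) (hz : z ∈ X)
    (hs : ∀ i, ⟪z, n i⟫ = c i → ⟪s, n i⟫ ≤ 0) :
    ∃ ε > (0 : ℝ), z + ε • s ∈ X ∧ ∀ i, ⟪z + ε • s, n i⟫ = c i → ⟪z, n i⟫ = c i := by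
  simp only [hX, Set.mem_iInter, Set.mem_ofPred_eq] at hz ⊢
  have hlin (ε : ℝ) (i : ι) : ⟪z + ε • s, n i⟫ = ⟪z, n i⟫ + ε * ⟪s, n i⟫ := by
    rw [inner_add_left, real_inner_smul_left]
  have hfacet (i : ι) : ∀ᶠ ε in 𝓝[>] (0 : ℝ),
      ⟪z + ε • s, n i⟫ ≤ c i ∧ (⟪z + ε • s, n i⟫ = c i → ⟪z, n i⟫ = c i) := by
    rcases (hz i).eq_or_lt with hi | hi
    · filter_upwards [self_mem_nhdsWithin] with ε (hε : 0 < ε)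
      rw [hlin, hi]
      exact ⟨add_le_of_nonpos_right (mul_nonpos_of_nonneg_of_nonpos hε.le (hs i hi)), fun _ => rfl⟩
    · have hlim : Tendsto (fun ε : ℝ => ⟪z + ε • s, n i⟫) (𝓝[>] 0) (𝓝 ⟪z, n i⟫) :=
        (Continuous.tendsto' (by fun_prop) 0 _ (by simp)).mono_left nhdsWithin_le_nhds
      filter_upwards [hlim.eventually_lt_const hi] with ε hε
      exact ⟨hε.le, fun h => absurd h hε.ne⟩
  obtain ⟨ε, hε, hfacets⟩ := (eventually_mem_nhdsWithin.and (eventually_all.2 hfacet)).exists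
  exact ⟨ε, hε, fun i => (hfacets i).1, fun i => (hfacets i).2⟩

theorem mem_tangentConePlus_iff [Finite ι] (hX : X = ⋂ i, {x | ⟪x, n i⟫ ≤ c i}) (hz : z ∈ X) :
    v ∈ tangentConePlus X z ↔ ∀ i, ⟪z, n i⟫ = c i → ⟪v, n i⟫ ≤ 0 := by
  refine ⟨fun hv i hi => ?_, fun hv => ?_⟩
  · exact inner_nonpos_of_mem_tangentConePlus_of_mem_normalConePlus hv
      (mem_normalConePlus_of_inner_eq hX hi)
  · obtain ⟨ε, hε, hmem, -⟩ := exists_pos_add_smul_mem hX hz hv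
    exact subset_closure ⟨ε, hε, hmem⟩

theorem mem_tangentConePlus_inter_neg [Finite ι] (hX : X = ⋂ i, {x | ⟪x, n i⟫ ≤ c i})
    (hz : z ∈ X) (hv : ∀ i, ⟪z, n i⟫ = c i → ⟪v, n i⟫ = 0) :
    v ∈ tangentConePlus X z ∩ -tangentConePlus X z := by
  refine ⟨(mem_tangentConePlus_iff hX hz).2 fun i hi => (hv i hi).le,
    (mem_tangentConePlus_iff hX hz).2 fun i hi => ?_⟩
  rw [inner_neg_left, hv i hi, neg_zero]

end Polyhedron

def reebCone (X : Set ℝ⁴) (y : ℝ⁴) : Set ℝ⁴ :=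
  {w | w ∈ tangentConePlus X y ∧ -Imap w ∈ normalConePlus X y}

theorem omega0_eq_zero_of_mem_reebCone {X : Set ℝ⁴} {y w₁ w₂ : ℝ⁴} (hw₁ : w₁ ∈ reebCone X y)
    (hw₂ : w₂ ∈ reebCone X y) : omega0 w₁ w₂ = 0 := by
  have h₁ := inner_nonpos_of_mem_tangentConePlus_of_mem_normalConePlus hw₂.1 hw₁.2
  have h₂ := inner_nonpos_of_mem_tangentConePlus_of_mem_normalConePlus hw₁.1 hw₂.2
  rw [inner_neg_right] at h₁ h₂
  rw [real_inner_comm] at h₁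
  have := inner_Imap_left w₁ w₂
  unfold omega0
  linarith

theorem isOrtho_map_span_pair {w₁ w₂ : ℝ⁴} (h : omega0 w₁ w₂ = 0) :
    (span ℝ {w₁, w₂}).map complexStructure.toLinearMap ⟂ span ℝ {w₁, w₂} := by
  rw [map_span, Set.image_pair, isOrtho_span]
  have h' : ⟪Imap w₂, w₁⟫ = 0 := by
    rw [inner_Imap_left, real_inner_comm, ← omega0, h, neg_zero]
  simp only [Set.mem_insert_iff, Set.mem_singleton_iff, forall_eq_or_imp, forall_eq]
  exact ⟨⟨inner_Imap_self w₁, h⟩, h', inner_Imap_self w₂⟩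

theorem exists_mem_frontier_tangentConePlus_inter_neg_eq_span {ι : Type*} [Finite ι] {n : ι → ℝ⁴}
    {c : ι → ℝ} {X : Set ℝ⁴} (hX : X = ⋂ i, {x | ⟪x, n i⟫ ≤ c i}) {y w₁ w₂ : ℝ⁴} (hy : y ∈ X)
    (hw₁ : w₁ ∈ reebCone X y) (hw₂ : w₂ ∈ reebCone X y) (hind : LinearIndependent ℝ ![w₁, w₂]) :
    ∃ y' ∈ frontier X, tangentConePlus X y' ∩ -tangentConePlus X y' = span ℝ {w₁, w₂} := by
  set P := span ℝ {w₁, w₂}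
  have hiso : P.map complexStructure.toLinearMap ⟂ P :=
    isOrtho_map_span_pair (omega0_eq_zero_of_mem_reebCone hw₁ hw₂)
  have hfacet {w : ℝ⁴} (hw : w ∈ reebCone X y) (i : ι) (hi : ⟪y, n i⟫ = c i) : ⟪w, n i⟫ ≤ 0 :=
    (mem_tangentConePlus_iff hX hy).1 hw.1 i hi
  obtain ⟨ε, hε, hy'X, hy'facet⟩ := exists_pos_add_smul_mem hX hy (s := w₁ + w₂) fun i hi => by
    rw [inner_add_left]; linarith [hfacet hw₁ i hi, hfacet hw₂ i hi]
  set y' := y + ε • (w₁ + w₂)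
  have hflat (i : ι) (hi : ⟪y', n i⟫ = c i) : ⟪w₁, n i⟫ = 0 ∧ ⟪w₂, n i⟫ = 0 := by
    have hyi := hy'facet i hi
    rw [inner_add_left, real_inner_smul_left, inner_add_left, hyi] at hi
    have := hfacet hw₁ i hyi
    have := hfacet hw₂ i hyi
    constructor <;> nlinarith
  have hw₁P : w₁ ∈ P := subset_span (by simp)
  have hw₂P : w₂ ∈ P := subset_span (by simp)
  have hnormal {w : ℝ⁴} (hw : w ∈ reebCone X y) (hwP : w ∈ P) :
      -Imap w ∈ normalConePlus X y' := by
    have h : ⟪Imap w, w₁ + w₂⟫ = 0 := hiso.inner_eq (mem_map_of_mem hwP) (add_mem hw₁P hw₂P)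
    exact mem_normalConePlus_add_smul hw.2 (by rw [inner_neg_right, real_inner_comm, h, neg_zero]) ε
  refine ⟨y', mem_frontier_of_mem_normalConePlus hy'X (hnormal hw₁ hw₁P) ?_, ?_⟩
  · simpa using complexStructure.map_ne_zero_iff.2 (hind.ne_zero 0)
  refine Set.Subset.antisymm (fun v ⟨hv, hv'⟩ => ?_) fun v hv => ?_
  · rw [SetLike.mem_coe, eq_orthogonal_map_complexStructure hiso hind.finrank_span_pair]
    refine orthogonal_le ?_ (mem_orthogonal_span_normalConePlus hv hv')
    rw [map_span, Set.image_pair, span_le, Set.pair_subset_iff]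
    simp only [LinearEquiv.coe_coe, complexStructure_apply]
    exact ⟨by simpa using neg_mem (subset_span (hnormal hw₁ hw₁P)),
      by simpa using neg_mem (subset_span (hnormal hw₂ hw₂P))⟩
  · obtain ⟨a, b, rfl⟩ := mem_span_pair.1 hv
    refine mem_tangentConePlus_inter_neg hX hy'X fun i hi => ?_
    simp [inner_add_left, real_inner_smul_left, hflat i hi]

theorem reebCone_dim_le_one_general {N : ℕ}
    (n : Fin N → EuclideanSpace ℝ (Fin 4)) (c : Fin N → ℝ)
    (X : Set (EuclideanSpace ℝ (Fin 4)))
    (hX : X = ⋂ i, {x | ⟪x, n i⟫ ≤ c i})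
    (hsymp : ∀ y ∈ frontier X, ∀ L : Submodule ℝ (EuclideanSpace ℝ (Fin 4)),
      (L : Set (EuclideanSpace ℝ (Fin 4))) =
        tangentConePlus X y ∩ -(tangentConePlus X y) →
      Module.finrank ℝ L = 2 →
      ∃ u ∈ L, ∃ v ∈ L, omega0 u v ≠ 0) :
    ∀ y ∈ frontier X, ∀ w₁ w₂ : EuclideanSpace ℝ (Fin 4),
      w₁ ∈ tangentConePlus X y → -(Imap w₁) ∈ normalConePlus X y →
      w₂ ∈ tangentConePlus X y → -(Imap w₂) ∈ normalConePlus X y →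
      ∃ a b : ℝ, (a ≠ 0 ∨ b ≠ 0) ∧ a • w₁ + b • w₂ = 0 := by
  intro y hy w₁ w₂ hT₁ hN₁ hT₂ hN₂
  by_contra hdep
  have hind : LinearIndependent ℝ ![w₁, w₂] := LinearIndependent.pair_iff.2 fun a b hab => by
    by_contra h
    exact hdep ⟨a, b, not_and_or.1 h, hab⟩
  have hw₁ : w₁ ∈ reebCone X y := ⟨hT₁, hN₁⟩
  have hw₂ : w₂ ∈ reebCone X y := ⟨hT₂, hN₂⟩
  have hyX : y ∈ X := (isClosed_of_eq_iInter_halfspaces hX).frontier_subset hy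
  obtain ⟨y', hy', hface⟩ :=
    exists_mem_frontier_tangentConePlus_inter_neg_eq_span hX hyX hw₁ hw₂ hind
  obtain ⟨u, hu, v, hv, huv⟩ := hsymp y' hy' _ hface.symm hind.finrank_span_pair
  exact huv ((isOrtho_map_span_pair (omega0_eq_zero_of_mem_reebCone hw₁ hw₂)).inner_eq
    (mem_map_of_mem hu) hv)

/-- Lemma 3.8: if `X ⊆ ℝ⁴` is a symplectic polytope (a convex polytope with `0` in its
interior, none of whose 2-faces is Lagrangian; the latter is expressed by requiring
that for every boundary point `y` whose face direction space
`L_y = T_y⁺X ∩ (−T_y⁺X)` is a 2-dimensional subspace, `ω₀` does not vanish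
identically on `L_y`), then for every `y ∈ frontier X`, any two vectors of the Reeb
cone `R_y⁺X = {w : w ∈ T_y⁺X, −i·w ∈ N_y⁺X}` are linearly dependent. -/
theorem reebCone_dim_le_one {N : ℕ}
    (n : Fin N → EuclideanSpace ℝ (Fin 4)) (c : Fin N → ℝ)
    (hn : ∀ i, n i ≠ 0)
    (X : Set (EuclideanSpace ℝ (Fin 4)))
    (hX : X = ⋂ i, {x | ⟪x, n i⟫ ≤ c i})
    (hcomp : IsCompact X)
    (h0 : (0 : EuclideanSpace ℝ (Fin 4)) ∈ interior X)
    (hsymp : ∀ y ∈ frontier X, ∀ L : Submodule ℝ (EuclideanSpace ℝ (Fin 4)),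
      (L : Set (EuclideanSpace ℝ (Fin 4))) =
        tangentConePlus X y ∩ -(tangentConePlus X y) →
      Module.finrank ℝ L = 2 →
      ∃ u ∈ L, ∃ v ∈ L, omega0 u v ≠ 0) :
    ∀ y ∈ frontier X, ∀ w₁ w₂ : EuclideanSpace ℝ (Fin 4),
      w₁ ∈ tangentConePlus X y → -(Imap w₁) ∈ normalConePlus X y →
      w₂ ∈ tangentConePlus X y → -(Imap w₂) ∈ normalConePlus X y →
      ∃ a b : ℝ, (a ≠ 0 ∨ b ≠ 0) ∧ a • w₁ + b • w₂ = 0 :=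
  reebCone_dim_le_one_general n c X hX hsymp
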